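/- arXiv:2004.02351 — 5 statements merged into one kernel-verified Lean document; each statement's English description precedes it below -/
import Mathlib

section
/- Let k ≥ 1 be an integer and let g : ℝ → ℝ be of class C^{k+1} on an open interval I containing 0, with g(0) = 0 and g'(0) = 0. Define ḡ : I → ℝ by ḡ(t) = g(t)/t for t ≠ 0 and ḡ(0) = 0. Then ḡ is of class C^k on I. -/
/-!
Hadamard's lemma: since `g 0 = 0`, the fundamental theorem of calculus gives
`g t / t = ∫₀¹ g' (s t) ds` for `t ≠ 0`, and since `g' 0 = 0` the same formula holds at `t = 0`.
The right-hand side is one derivative less regular than `g`: differentiating under the integral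
sign turns `∫₀¹ sʲ φ (s t) ds` into `∫₀¹ sʲ⁺¹ φ' (s t) ds`, with domination coming from the
boundedness of `φ'` on a compact subinterval containing `0` and all `t` near a given `t₀`.
-/

open Set Filter Topology MeasureTheory intervalIntegral

lemma mul_mem_uIcc_zero {s : ℝ} (hs : s ∈ Icc (0 : ℝ) 1) (t : ℝ) : s * t ∈ uIcc 0 t := by
  rcases le_total 0 t with h | h
  · rw [uIcc_of_le h]
    constructor <;> nlinarith [hs.1, hs.2]
  · rw [uIcc_of_ge h]
    constructor <;> nlinarith [hs.1, hs.2]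

lemma uIoc_zero_one_subset_Icc : uIoc (0 : ℝ) 1 ⊆ Icc 0 1 := by
  rw [uIoc_of_le zero_le_one]
  exact Ioc_subset_Icc_self

section Parametric

variable {E : Type*} [NormedAddCommGroup E] [NormedSpace ℝ E] {U : Set ℝ}

lemma exists_isCompact_eventually_mul_mem (hU : IsOpen U) (hU' : U.OrdConnected) (h0 : 0 ∈ U)
    {t₀ : ℝ} (ht₀ : t₀ ∈ U) :
    ∃ K ⊆ U, IsCompact K ∧ ∀ᶠ t in 𝓝 t₀, ∀ s ∈ Icc (0 : ℝ) 1, s * t ∈ K := by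
  obtain ⟨ε, hε, hball⟩ := Metric.isOpen_iff.1 hU t₀ ht₀
  rw [Real.ball_eq_Ioo] at hball
  have hlo : t₀ - ε / 2 ∈ U := hball ⟨by linarith, by linarith⟩
  have hhi : t₀ + ε / 2 ∈ U := hball ⟨by linarith, by linarith⟩
  refine ⟨Icc (min (t₀ - ε / 2) 0) (max (t₀ + ε / 2) 0), hU'.out ?_ ?_, isCompact_Icc, ?_⟩
  · rcases min_choice (t₀ - ε / 2) 0 with h | h <;> rw [h] <;> assumption
  · rcases max_choice (t₀ + ε / 2) 0 with h | h <;> rw [h] <;> assumption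
  filter_upwards [Ioo_mem_nhds (show t₀ - ε / 2 < t₀ by linarith)
    (show t₀ < t₀ + ε / 2 by linarith)] with t ht s hs
  have htK : t ∈ Icc (min (t₀ - ε / 2) 0) (max (t₀ + ε / 2) 0) :=
    ⟨(min_le_left _ _).trans ht.1.le, ht.2.le.trans (le_max_left _ _)⟩
  exact ordConnected_Icc.uIcc_subset ⟨min_le_right _ _, le_max_right _ _⟩ htK
    (mul_mem_uIcc_zero hs t)

lemma norm_pow_smul_le {s : ℝ} (hs : s ∈ Icc (0 : ℝ) 1) {x : E} {M : ℝ} (hx : ‖x‖ ≤ M) (j : ℕ) :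
    ‖s ^ j • x‖ ≤ M := by
  rw [norm_smul, norm_pow, Real.norm_of_nonneg hs.1]
  exact (mul_le_of_le_one_left (norm_nonneg x) (pow_le_one₀ hs.1 hs.2)).trans hx

lemma continuousOn_pow_smul_comp_mul (hU' : U.OrdConnected) (h0 : 0 ∈ U) {φ : ℝ → E}
    (hφ : ContinuousOn φ U) (j : ℕ) {t : ℝ} (ht : t ∈ U) :
    ContinuousOn (fun s : ℝ => s ^ j • φ (s * t)) (Icc 0 1) :=
  (continuous_pow j).continuousOn.smul <| hφ.comp (by fun_prop) fun s hs =>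
    hU'.uIcc_subset h0 ht (mul_mem_uIcc_zero hs t)

lemma continuousOn_intervalIntegral_pow_smul_comp_mul (hU : IsOpen U) (hU' : U.OrdConnected)
    (h0 : 0 ∈ U) {φ : ℝ → E} (hφ : ContinuousOn φ U) (j : ℕ) :
    ContinuousOn (fun t => ∫ s in (0 : ℝ)..1, s ^ j • φ (s * t)) U := by
  intro t₀ ht₀
  obtain ⟨K, hKU, hK, hmem⟩ := exists_isCompact_eventually_mul_mem hU hU' h0 ht₀
  obtain ⟨M, hM⟩ := hK.exists_bound_of_continuousOn (hφ.mono hKU)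
  refine ContinuousAt.continuousWithinAt <|
    continuousAt_of_dominated_interval (bound := fun _ => M) ?_ ?_ intervalIntegrable_const ?_
  · filter_upwards [hmem] with t ht
    have htU : t ∈ U := hKU (by simpa using ht 1 (by simp))
    exact ((continuousOn_pow_smul_comp_mul hU' h0 hφ j htU).mono
      uIoc_zero_one_subset_Icc).aestronglyMeasurable measurableSet_uIoc
  · filter_upwards [hmem] with t ht
    refine Eventually.of_forall fun s hs => ?_
    have hs := uIoc_zero_one_subset_Icc hs
    exact norm_pow_smul_le hs (hM _ (ht s hs)) j
  · refine Eventually.of_forall fun s hs => ?_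
    have hs := uIoc_zero_one_subset_Icc hs
    have hst : s * t₀ ∈ U := hU'.uIcc_subset h0 ht₀ (mul_mem_uIcc_zero hs t₀)
    exact continuousAt_const.smul
      ((hφ.continuousAt (hU.mem_nhds hst)).comp (by fun_prop))

lemma hasDerivAt_intervalIntegral_pow_smul_comp_mul (hU : IsOpen U) (hU' : U.OrdConnected)
    (h0 : 0 ∈ U) {φ φ' : ℝ → E} (hφ : ∀ x ∈ U, HasDerivAt φ (φ' x) x)
    (hφ' : ContinuousOn φ' U) (j : ℕ) {t₀ : ℝ} (ht₀ : t₀ ∈ U) :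
    HasDerivAt (fun t => ∫ s in (0 : ℝ)..1, s ^ j • φ (s * t))
      (∫ s in (0 : ℝ)..1, s ^ (j + 1) • φ' (s * t₀)) t₀ := by
  have hφc : ContinuousOn φ U := fun x hx => (hφ x hx).continuousAt.continuousWithinAt
  obtain ⟨K, hKU, hK, hmem⟩ := exists_isCompact_eventually_mul_mem hU hU' h0 ht₀
  obtain ⟨M, hM⟩ := hK.exists_bound_of_continuousOn (hφ'.mono hKU)
  obtain ⟨V, hV, hVmem⟩ := hmem.exists_mem
  refine (hasDerivAt_integral_of_dominated_loc_of_deriv_le (F := fun t s => s ^ j • φ (s * t))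
    (F' := fun t s => s ^ (j + 1) • φ' (s * t)) (bound := fun _ => M) hV ?_ ?_ ?_ ?_
    intervalIntegrable_const ?_).2
  · filter_upwards [hV] with t ht
    have htU : t ∈ U := hKU (by simpa using hVmem t ht 1 (by simp))
    exact ((continuousOn_pow_smul_comp_mul hU' h0 hφc j htU).mono
      uIoc_zero_one_subset_Icc).aestronglyMeasurable measurableSet_uIoc
  · exact ((continuousOn_pow_smul_comp_mul hU' h0 hφc j ht₀).mono
      (by rw [uIcc_of_le zero_le_one])).intervalIntegrable
  · exact ((continuousOn_pow_smul_comp_mul hU' h0 hφ' (j + 1) ht₀).mono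
      uIoc_zero_one_subset_Icc).aestronglyMeasurable measurableSet_uIoc
  · refine Eventually.of_forall fun s hs t ht => ?_
    have hs := uIoc_zero_one_subset_Icc hs
    exact norm_pow_smul_le hs (hM _ (hVmem t ht s hs)) (j + 1)
  · refine Eventually.of_forall fun s hs t ht => ?_
    have hs := uIoc_zero_one_subset_Icc hs
    have hderiv : HasDerivAt (fun u => s ^ j • φ (s * u)) (s ^ j • (s * 1) • φ' (s * t)) t :=
      ((hφ _ (hKU (hVmem t ht s hs))).scomp t ((hasDerivAt_id t).const_mul s)).const_smul (s ^ j)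
    rwa [mul_one, smul_smul, ← pow_succ] at hderiv

lemma contDiffOn_intervalIntegral_pow_smul_comp_mul (hU : IsOpen U) (hU' : U.OrdConnected)
    (h0 : 0 ∈ U) {m : ℕ} {φ : ℝ → E} (hφ : ContDiffOn ℝ m φ U) (j : ℕ) :
    ContDiffOn ℝ m (fun t => ∫ s in (0 : ℝ)..1, s ^ j • φ (s * t)) U := by
  induction m generalizing j φ with
  | zero =>
    rw [CharP.cast_eq_zero, contDiffOn_zero] at hφ ⊢
    exact continuousOn_intervalIntegral_pow_smul_comp_mul hU hU' h0 hφ j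
  | succ m ih =>
    rw [Nat.cast_succ, contDiffOn_succ_iff_deriv_of_isOpen hU] at hφ ⊢
    obtain ⟨hφd, -, hφ'⟩ := hφ
    have hφ : ∀ x ∈ U, HasDerivAt φ (deriv φ x) x := fun x hx =>
      ((hφd x hx).differentiableAt (hU.mem_nhds hx)).hasDerivAt
    have key := fun t (ht : t ∈ U) =>
      hasDerivAt_intervalIntegral_pow_smul_comp_mul hU hU' h0 hφ hφ'.continuousOn j ht
    refine ⟨fun t ht => (key t ht).differentiableAt.differentiableWithinAt, by simp, ?_⟩
    exact (ih hφ' (j + 1)).congr fun t ht => (key t ht).deriv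

lemma intervalIntegral_comp_mul_eq_slope [CompleteSpace E] {g g' : ℝ → E} {t : ℝ} (ht : t ≠ 0)
    (hg : ∀ x ∈ uIcc 0 t, HasDerivAt g (g' x) x) (hg' : IntervalIntegrable g' volume 0 t) :
    ∫ s in (0 : ℝ)..1, g' (s * t) = slope g 0 t := by
  rw [integral_comp_mul_right g' ht, zero_mul, one_mul, integral_eq_sub_of_hasDerivAt hg hg',
    slope_def_module, sub_zero]

theorem contDiffOn_dslope_zero [CompleteSpace E] (hU : IsOpen U) (hU' : U.OrdConnected)
    (h0 : 0 ∈ U) {m : ℕ} {g : ℝ → E} (hg : ContDiffOn ℝ (m + 1) g U) :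
    ContDiffOn ℝ m (dslope g 0) U := by
  have hg' : ContDiffOn ℝ m (deriv g) U := hg.deriv_of_isOpen hU le_rfl
  refine (contDiffOn_intervalIntegral_pow_smul_comp_mul hU hU' h0 hg' 0).congr fun t ht => ?_
  simp only [pow_zero, one_smul]
  rcases eq_or_ne t 0 with rfl | ht0
  · simp
  have hsub : uIcc 0 t ⊆ U := hU'.uIcc_subset h0 ht
  rw [dslope_of_ne _ ht0]
  refine (intervalIntegral_comp_mul_eq_slope ht0 (fun x hx => ?_)
    ((hg'.continuousOn.mono hsub).intervalIntegrable)).symm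
  exact ((hg.differentiableOn (by simp) x (hsub hx)).differentiableAt
    (hU.mem_nhds (hsub hx))).hasDerivAt

end Parametric

theorem stmt_0_general (k : ℕ) (a b : ℝ) (ha : a < 0) (hb : 0 < b)
    (g : ℝ → ℝ) (hg : ContDiffOn ℝ (k + 1) g (Set.Ioo a b))
    (hg0 : g 0 = 0) (hg'0 : deriv g 0 = 0) :
    ContDiffOn ℝ k (fun t : ℝ => if t = 0 then 0 else g t / t) (Set.Ioo a b) := by
  refine (contDiffOn_dslope_zero isOpen_Ioo ordConnected_Ioo ⟨ha, hb⟩ hg).congr fun t _ => ?_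
  rcases eq_or_ne t 0 with rfl | ht
  · simp [hg'0]
  · simp [ht, dslope_of_ne, slope_def_field, hg0]

/-- If `g` is `C^{k+1}` on an open interval containing `0` with `g 0 = 0` and
`g' 0 = 0`, then `t ↦ g t / t` (extended by `0` at `0`) is `C^k` there. -/
theorem stmt_0 (k : ℕ) (hk : 1 ≤ k) (a b : ℝ) (ha : a < 0) (hb : 0 < b)
    (g : ℝ → ℝ) (hg : ContDiffOn ℝ (k + 1) g (Set.Ioo a b))
    (hg0 : g 0 = 0) (hg'0 : deriv g 0 = 0) :
    ContDiffOn ℝ k (fun t : ℝ => if t = 0 then 0 else g t / t) (Set.Ioo a b) :=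
  stmt_0_general k a b ha hb g hg hg0 hg'0
end

section
/- Let m ≥ 1 be an integer, α ≤ −m a real number, and set N = ⌊−α⌋ − m. Let ε₀ > 0 and let φ : ℝ → ℝ be of class C^{N+1} on [0, ε₀]. Let T(t) = Σ_{j=0}^{N} φ^{(j)}(0) t^j / j! be the degree-N Taylor polynomial of φ at 0. Then the function t ↦ t^{α+m−1}(φ(t) − T(t)) is Lebesgue integrable on (0, ε₀), and for every t ∈ (0, ε₀] one has |t^{α+m−1}(φ(t) − T(t))| ≤ (sup_{s∈[0,ε₀]} |φ^{(N+1)}(s)| / (N+1)!) · t^{α+m+N}. -/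
open MeasureTheory Set

/-! By Taylor's theorem with the Lagrange remainder, on `(0, t]` the difference `φ - T` is
bounded by `M t^(N+1) / (N+1)!`, where `M` is the supremum of `|φ^(N+1)|` on `[0, ε₀]`.
Multiplying by the weight gives the pointwise bound, whose exponent `α + m + N = α + ⌊-α⌋`
exceeds `-1`; hence the bound, and with it the weighted remainder, is integrable near `0`. -/

section Taylor

variable {E : Type*} [NormedAddCommGroup E] [NormedSpace ℝ E]

theorem iteratedDerivWithin_Icc_eq_of_lt (f : ℝ → E) (n : ℕ) {a b c x : ℝ} (hcb : c ≤ b)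
    (hx : x < c) : iteratedDerivWithin n f (Icc a c) x = iteratedDerivWithin n f (Icc a b) x := by
  have hIcc : Icc a c = Icc a b ∩ Iic c := by
    ext y
    exact ⟨fun hy => ⟨⟨hy.1, hy.2.trans hcb⟩, hy.2⟩, fun hy => ⟨hy.1.1, hy.2⟩⟩
  simp only [iteratedDerivWithin, hIcc, iteratedFDerivWithin_inter (Iic_mem_nhds hx)]

theorem taylorWithinEval_Icc_eq_of_lt (f : ℝ → E) (n : ℕ) {a b c : ℝ} (hcb : c ≤ b) (hac : a < c)
    (x : ℝ) : taylorWithinEval f n (Icc a c) a x = taylorWithinEval f n (Icc a b) a x := by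
  simp only [taylor_within_apply, iteratedDerivWithin_Icc_eq_of_lt f _ hcb hac]

end Taylor

theorem taylorWithinEval_eq_sum (f : ℝ → ℝ) (n : ℕ) (s : Set ℝ) (x₀ x : ℝ) :
    taylorWithinEval f n s x₀ x =
      ∑ j ∈ Finset.range (n + 1), iteratedDerivWithin j f s x₀ * (x - x₀) ^ j / j.factorial := by
  rw [taylor_within_apply]
  refine Finset.sum_congr rfl fun j _ => ?_
  rw [smul_eq_mul]
  ring

theorem abs_sub_taylorWithinEval_Icc_le {f : ℝ → ℝ} {n : ℕ} {a b C x : ℝ}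
    (hf : ContDiffOn ℝ (n + 1) f (Icc a b)) (hx : x ∈ Ioc a b)
    (hC : ∀ y ∈ Icc a b, |iteratedDerivWithin (n + 1) f (Icc a b) y| ≤ C) :
    |f x - taylorWithinEval f n (Icc a b) a x| ≤ C * (x - a) ^ (n + 1) / (n + 1).factorial := by
  obtain ⟨hax, hxb⟩ := hx
  have hf' : ContDiffOn ℝ (n + 1) f (Icc a x) := hf.mono (Icc_subset_Icc_right hxb)
  have hdiff : DifferentiableOn ℝ (iteratedDerivWithin n f (Icc a x)) (Ioo a x) :=
    (hf'.differentiableOn_iteratedDerivWithin (mod_cast n.lt_succ_self)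
      (uniqueDiffOn_Icc hax)).mono Ioo_subset_Icc_self
  obtain ⟨y, hy, hlagrange⟩ := taylor_mean_remainder_lagrange (n := n) hax.ne
    (by rw [uIcc_of_le hax.le]; exact hf'.of_succ) (by rwa [uIcc_of_le hax.le, uIoo_of_le hax.le])
  rw [uIoo_of_le hax.le] at hy
  rw [uIcc_of_le hax.le] at hlagrange
  rw [← taylorWithinEval_Icc_eq_of_lt f n hxb hax, hlagrange,
    iteratedDerivWithin_Icc_eq_of_lt f _ hxb hy.2, abs_div, abs_mul,
    abs_of_nonneg (pow_nonneg (sub_nonneg.2 hax.le) _), Nat.abs_cast]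
  gcongr
  exact hC y ⟨hy.1.le, hy.2.le.trans hxb⟩

theorem abs_rpow_mul_sub_taylorWithinEval_le {f : ℝ → ℝ} {n : ℕ} {ε C β t : ℝ}
    (hf : ContDiffOn ℝ (n + 1) f (Icc 0 ε))
    (hC : ∀ y ∈ Icc 0 ε, |iteratedDerivWithin (n + 1) f (Icc 0 ε) y| ≤ C) (ht : t ∈ Ioc 0 ε) :
    |t ^ β * (f t - taylorWithinEval f n (Icc 0 ε) 0 t)| ≤
      C / (n + 1).factorial * t ^ (β + n + 1) := by
  have ht₀ : 0 < t := ht.1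
  calc |t ^ β * (f t - taylorWithinEval f n (Icc 0 ε) 0 t)|
      ≤ t ^ β * (C * t ^ (n + 1) / (n + 1).factorial) := by
        rw [abs_mul, abs_of_pos (Real.rpow_pos_of_pos ht₀ β)]
        gcongr
        simpa only [sub_zero] using abs_sub_taylorWithinEval_Icc_le hf ht hC
    _ = C / (n + 1).factorial * t ^ (β + n + 1) := by
        rw [add_assoc, Real.rpow_add ht₀, ← Nat.cast_add_one, Real.rpow_natCast]
        ring

theorem integrableOn_Ioo_of_abs_le_rpow {g : ℝ → ℝ} {ε c γ : ℝ} (hγ : -1 < γ)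
    (hg : ContinuousOn g (Ioo 0 ε)) (hbound : ∀ t ∈ Ioo 0 ε, |g t| ≤ c * t ^ γ) :
    IntegrableOn g (Ioo 0 ε) := by
  have hrpow : IntegrableOn (fun t : ℝ => c * t ^ γ) (Ioo 0 ε) :=
    ((intervalIntegral.intervalIntegrable_rpow' hγ).1.mono_set Ioo_subset_Ioc_self).const_mul c
  refine hrpow.mono' (hg.aestronglyMeasurable measurableSet_Ioo) ?_
  filter_upwards [ae_restrict_mem measurableSet_Ioo] with t ht
  exact hbound t ht

theorem stmt_2_general (m : ℕ) (α : ℝ)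
    (N : ℕ) (hN : (N : ℤ) = ⌊-α⌋ - m)
    (ε₀ : ℝ) (hε₀ : 0 < ε₀) (φ : ℝ → ℝ)
    (hφ : ContDiffOn ℝ (N + 1) φ (Set.Icc 0 ε₀)) :
    IntegrableOn
      (fun t : ℝ => t ^ (α + m - 1) *
        (φ t - ∑ j ∈ Finset.range (N + 1),
          iteratedDerivWithin j φ (Set.Icc 0 ε₀) 0 * t ^ j / (j.factorial : ℝ)))
      (Set.Ioo 0 ε₀) ∧
    ∀ t ∈ Set.Ioc (0 : ℝ) ε₀,
      |t ^ (α + m - 1) *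
        (φ t - ∑ j ∈ Finset.range (N + 1),
          iteratedDerivWithin j φ (Set.Icc 0 ε₀) 0 * t ^ j / (j.factorial : ℝ))| ≤
      sSup ((fun s => |iteratedDerivWithin (N + 1) φ (Set.Icc 0 ε₀) s|) '' Set.Icc 0 ε₀)
        / ((N + 1).factorial : ℝ) * t ^ (α + m + N) := by
  have hsup : ∀ y ∈ Icc 0 ε₀, |iteratedDerivWithin (N + 1) φ (Icc 0 ε₀) y| ≤
      sSup ((fun s => |iteratedDerivWithin (N + 1) φ (Icc 0 ε₀) s|) '' Icc 0 ε₀) := fun y hy =>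
    (hφ.continuousOn_iteratedDerivWithin le_rfl (uniqueDiffOn_Icc hε₀)).abs.le_sSup_image_Icc hy
  have hexp_eq : α + m - 1 + N + 1 = α + m + N := by ring
  have hbound := fun t (ht : t ∈ Ioc 0 ε₀) => by
    simpa only [taylorWithinEval_eq_sum, sub_zero, hexp_eq] using
      abs_rpow_mul_sub_taylorWithinEval_le (β := α + m - 1) hφ hsup ht
  have hexp : -1 < α + m + N := by
    have hfloor : -α - 1 < ⌊-α⌋ := Int.sub_one_lt_floor (-α)
    have hNα : (N : ℝ) = ⌊-α⌋ - m := by exact_mod_cast hN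
    linarith
  refine ⟨integrableOn_Ioo_of_abs_le_rpow hexp ?_ fun t ht => hbound t (Ioo_subset_Ioc_self ht),
    hbound⟩
  exact .mul (fun t ht => (Real.continuousAt_rpow_const t _ (.inl ht.1.ne')).continuousWithinAt)
    (.sub (hφ.continuousOn.mono Ioo_subset_Icc_self) (by fun_prop))

/-- Taylor remainder bound: for `α ≤ -m`, `N = ⌊-α⌋ - m` and `φ` of class
`C^{N+1}` on `[0, ε₀]`, the function `t ↦ t^(α+m-1) (φ t - T t)` (where `T` is
the degree-`N` Taylor polynomial of `φ` at `0`) is integrable on `(0, ε₀)` and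
satisfies the pointwise bound by `(sup |φ^(N+1)| / (N+1)!) t^(α+m+N)`. -/
theorem stmt_2 (m : ℕ) (hm : 1 ≤ m) (α : ℝ) (hα : α ≤ -(m : ℝ))
    (N : ℕ) (hN : (N : ℤ) = ⌊-α⌋ - m)
    (ε₀ : ℝ) (hε₀ : 0 < ε₀) (φ : ℝ → ℝ)
    (hφ : ContDiffOn ℝ (N + 1) φ (Set.Icc 0 ε₀)) :
    IntegrableOn
      (fun t : ℝ => t ^ (α + m - 1) *
        (φ t - ∑ j ∈ Finset.range (N + 1),
          iteratedDerivWithin j φ (Set.Icc 0 ε₀) 0 * t ^ j / (j.factorial : ℝ)))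
      (Set.Ioo 0 ε₀) ∧
    ∀ t ∈ Set.Ioc (0 : ℝ) ε₀,
      |t ^ (α + m - 1) *
        (φ t - ∑ j ∈ Finset.range (N + 1),
          iteratedDerivWithin j φ (Set.Icc 0 ε₀) 0 * t ^ j / (j.factorial : ℝ))| ≤
      sSup ((fun s => |iteratedDerivWithin (N + 1) φ (Set.Icc 0 ε₀) s|) '' Set.Icc 0 ε₀)
        / ((N + 1).factorial : ℝ) * t ^ (α + m + N) :=
  stmt_2_general m α N hN ε₀ hε₀ φ hφ
end

section
/- Let m ≥ 1 be an integer and let α < −m be a real number that is not an integer. Set N = ⌊−α⌋ − m. Let ε₀ > 0 and let φ : ℝ → ℝ be of class C^{N+1} on [0, ε₀]. Let T(t) = Σ_{j=0}^{N} φ^{(j)}(0) t^j / j! be the degree-N Taylor polynomial of φ at 0. Then as ε → 0⁺, the quantity ∫_ε^{ε₀} t^{α+m−1} φ(t) dt + Σ_{j=0}^{N} (φ^{(j)}(0) / ((α+m+j) · j!)) · ε^{α+m+j} converges to the finite limit Σ_{j=0}^{N} (φ^{(j)}(0) / ((α+m+j) · j!)) · ε₀^{α+m+j} + ∫_0^{ε₀}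 t^{α+m−1}(φ(t) − T(t)) dt, where the last integral is finite. -/
/-!
Subtracting the Taylor polynomial `T` of degree `N` leaves a remainder `φ - T = O(t^(N+1))`, and
since `α + m + N > -1` the function `t^(α+m-1) (φ - T)` is integrable at `0`. The monomials of
`T` are integrated explicitly: `∫_ε^{ε₀} t^(α+m-1) t^j dt = (ε₀^(α+m+j) - ε^(α+m+j)) / (α+m+j)`,
where `α + m + j ≠ 0` because `α` is not an integer. Hence the regularized quantity equals, for
every `ε > 0`, the constant `Σ_j … ε₀^(α+m+j)` plus `∫_ε^{ε₀} t^(α+m-1) (φ - T) dt`, and the latter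
converges as `ε → 0⁺` by integrability.
-/

open MeasureTheory Set Filter Topology

namespace HadamardFinitePart

noncomputable def taylorSum (d : ℕ → ℝ) (N : ℕ) (t : ℝ) : ℝ :=
  ∑ j ∈ Finset.range (N + 1), d j * t ^ j / (j.factorial : ℝ)

/-- An antiderivative of `t ↦ t^(β-1) * taylorSum d N t` on `(0, ∞)`. -/
noncomputable def counterterm (d : ℕ → ℝ) (β : ℝ) (N : ℕ) (ε : ℝ) : ℝ :=
  ∑ j ∈ Finset.range (N + 1), d j / ((β + j) * (j.factorial : ℝ)) * ε ^ (β + j)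

theorem continuous_taylorSum (d : ℕ → ℝ) (N : ℕ) : Continuous (taylorSum d N) := by
  unfold taylorSum
  fun_prop

theorem exists_abs_sub_taylorSum_le {φ : ℝ → ℝ} {b : ℝ} {N : ℕ} (hb : 0 ≤ b)
    (hφ : ContDiffOn ℝ (N + 1) φ (Icc 0 b)) :
    ∃ C, ∀ x ∈ Icc 0 b,
      |φ x - taylorSum (fun j => iteratedDerivWithin j φ (Icc 0 b) 0) N x| ≤ C * x ^ (N + 1) := by
  obtain ⟨C, hC⟩ := exists_taylor_mean_remainder_bound hb hφ
  refine ⟨C, fun x hx => ?_⟩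
  have hT : taylorWithinEval φ N (Icc 0 b) 0 x
      = taylorSum (fun j => iteratedDerivWithin j φ (Icc 0 b) 0) N x := by
    rw [taylor_within_apply, taylorSum]
    refine Finset.sum_congr rfl fun j _ => ?_
    rw [smul_eq_mul, sub_zero]
    ring
  simpa [hT] using hC x hx

theorem integrableOn_rpow_mul_of_abs_le {f : ℝ → ℝ} {r C b : ℝ} {n : ℕ} (hr : -1 < r + n)
    (hf : ContinuousOn f (Ioo 0 b)) (hbound : ∀ t ∈ Ioo 0 b, |f t| ≤ C * t ^ n) :
    IntegrableOn (fun t => t ^ r * f t) (Ioo 0 b) := by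
  rcases le_or_gt b 0 with hb | hb
  · simp [Ioo_eq_empty_of_le hb]
  have hdom : IntegrableOn (fun t : ℝ => C * t ^ (r + n)) (Ioo 0 b) :=
    ((intervalIntegral.integrableOn_Ioo_rpow_iff hb).2 hr).const_mul C
  have hmeas : AEStronglyMeasurable (fun t => t ^ r * f t) (volume.restrict (Ioo 0 b)) :=
    ((continuousOn_id.rpow_const fun t ht => Or.inl ht.1.ne').mul hf).aestronglyMeasurable
      measurableSet_Ioo
  refine hdom.mono' hmeas ((ae_restrict_iff' measurableSet_Ioo).2 (ae_of_all _ fun t ht => ?_))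
  obtain ⟨ht, htb⟩ := ht
  calc ‖t ^ r * f t‖ = t ^ r * |f t| := by
        rw [Real.norm_eq_abs, abs_mul, abs_of_nonneg (Real.rpow_nonneg ht.le r)]
    _ ≤ t ^ r * (C * t ^ n) := by gcongr; exact hbound t ⟨ht, htb⟩
    _ = C * t ^ (r + n) := by rw [Real.rpow_add ht, Real.rpow_natCast]; ring

theorem tendsto_intervalIntegral_nhdsGT_zero {g : ℝ → ℝ} {b : ℝ} (hb : 0 < b)
    (hg : IntegrableOn g (Ioo 0 b)) :
    Tendsto (fun ε => ∫ t in ε..b, g t) (𝓝[>] 0) (𝓝 (∫ t in Ioo 0 b, g t)) := by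
  have hcont : ContinuousOn (fun x => ∫ t in x..b, g t) (Icc 0 b) := by
    rw [← uIcc_of_le hb.le]
    exact intervalIntegral.continuousOn_primitive_interval_left
      (by rwa [uIcc_of_le hb.le, integrableOn_Icc_iff_integrableOn_Ioo])
  have hlim := ((hcont 0 ⟨le_rfl, hb.le⟩).mono Ioo_subset_Icc_self).tendsto
  rwa [nhdsWithin_Ioo_eq_nhdsGT hb, intervalIntegral.integral_of_le hb.le,
    integral_Ioc_eq_integral_Ioo] at hlim

theorem integral_rpow_mul_taylorSum {d : ℕ → ℝ} {β a b : ℝ} {N : ℕ} (ha : 0 < a) (hb : 0 < b)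
    (hβ : ∀ j ≤ N, β + j ≠ 0) :
    ∫ t in a..b, t ^ (β - 1) * taylorSum d N t = counterterm d β N b - counterterm d β N a := by
  have hpos : ∀ t ∈ uIcc a b, 0 < t := fun t ht => lt_of_lt_of_le (lt_min ha hb) ht.1
  have h0 : (0 : ℝ) ∉ uIcc a b := fun h => (hpos 0 h).false
  have hmonomial : ∀ j ∈ Finset.range (N + 1),
      ∫ t in a..b, d j / j.factorial * t ^ (β - 1 + j)
        = d j / ((β + j) * j.factorial) * (b ^ (β + j) - a ^ (β + j)) := by
    intro j hj
    have hj : β + j ≠ 0 := hβ j (Finset.mem_range_succ_iff.1 hj)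
    rw [intervalIntegral.integral_const_mul,
      integral_rpow (Or.inr ⟨fun h => hj (by linarith), h0⟩),
      show β - 1 + j + 1 = β + j by ring]
    field_simp
  calc ∫ t in a..b, t ^ (β - 1) * taylorSum d N t
      = ∫ t in a..b, ∑ j ∈ Finset.range (N + 1), d j / j.factorial * t ^ (β - 1 + j) := by
        refine intervalIntegral.integral_congr fun t ht => ?_
        simp only [taylorSum, Finset.mul_sum]
        refine Finset.sum_congr rfl fun j _ => ?_
        rw [Real.rpow_add (hpos t ht), Real.rpow_natCast]
        ring
    _ = ∑ j ∈ Finset.range (N + 1),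
          d j / ((β + j) * j.factorial) * (b ^ (β + j) - a ^ (β + j)) :=
        (intervalIntegral.integral_finsetSum fun j _ =>
          (continuousOn_const.mul (continuousOn_id.rpow_const fun t ht =>
            Or.inl (hpos t ht).ne')).intervalIntegrable).trans (Finset.sum_congr rfl hmonomial)
    _ = counterterm d β N b - counterterm d β N a := by
        simp only [counterterm, ← Finset.sum_sub_distrib, mul_sub]

theorem intervalIntegral_add_counterterm {φ : ℝ → ℝ} {d : ℕ → ℝ} {β ε b : ℝ} {N : ℕ}
    (hε : 0 < ε) (hb : 0 < b) (hβ : ∀ j ≤ N, β + j ≠ 0) (hφ : ContinuousOn φ (uIcc ε b)) :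
    (∫ t in ε..b, t ^ (β - 1) * φ t) + counterterm d β N ε
      = counterterm d β N b + ∫ t in ε..b, t ^ (β - 1) * (φ t - taylorSum d N t) := by
  have hrpow : ContinuousOn (fun t : ℝ => t ^ (β - 1)) (uIcc ε b) :=
    continuousOn_id.rpow_const fun t ht => Or.inl (lt_of_lt_of_le (lt_min hε hb) ht.1).ne'
  have hsplit := intervalIntegral.integral_sub (μ := volume) (hrpow.mul hφ).intervalIntegrable
    (hrpow.mul (continuous_taylorSum d N).continuousOn).intervalIntegrable
  simp only [Pi.mul_apply, ← mul_sub] at hsplit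
  rw [hsplit, integral_rpow_mul_taylorSum hε hb hβ]
  ring

theorem tendsto_intervalIntegral_add_counterterm {φ : ℝ → ℝ} {d : ℕ → ℝ} {β b C : ℝ} {N : ℕ}
    (hb : 0 < b) (hβN : -1 < β + N) (hβ : ∀ j ≤ N, β + j ≠ 0) (hφ : ContinuousOn φ (Icc 0 b))
    (hC : ∀ x ∈ Icc 0 b, |φ x - taylorSum d N x| ≤ C * x ^ (N + 1)) :
    IntegrableOn (fun t => t ^ (β - 1) * (φ t - taylorSum d N t)) (Ioo 0 b) ∧
    Tendsto (fun ε => (∫ t in ε..b, t ^ (β - 1) * φ t) + counterterm d β N ε) (𝓝[>] 0)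
      (𝓝 (counterterm d β N b + ∫ t in Ioo 0 b, t ^ (β - 1) * (φ t - taylorSum d N t))) := by
  have hint : IntegrableOn (fun t => t ^ (β - 1) * (φ t - taylorSum d N t)) (Ioo 0 b) :=
    integrableOn_rpow_mul_of_abs_le (by push_cast; linarith)
      ((hφ.mono Ioo_subset_Icc_self).sub (continuous_taylorSum d N).continuousOn)
      fun t ht => hC t (Ioo_subset_Icc_self ht)
  refine ⟨hint, ((tendsto_intervalIntegral_nhdsGT_zero hb hint).const_add _).congr' ?_⟩
  filter_upwards [Ioo_mem_nhdsGT hb] with ε hε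
  rw [intervalIntegral_add_counterterm hε.1 hb hβ
    (hφ.mono (by rw [uIcc_of_le hε.2.le]; exact Icc_subset_Icc_left hε.1.le))]

end HadamardFinitePart

open HadamardFinitePart in
theorem stmt_3_general (m : ℕ) (α : ℝ)
    (hαint : ∀ n : ℤ, α ≠ (n : ℝ))
    (N : ℕ) (hN : (N : ℤ) = ⌊-α⌋ - m)
    (ε₀ : ℝ) (hε₀ : 0 < ε₀) (φ : ℝ → ℝ)
    (hφ : ContDiffOn ℝ (N + 1) φ (Set.Icc 0 ε₀)) :
    IntegrableOn
      (fun t : ℝ => t ^ (α + m - 1) *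
        (φ t - ∑ j ∈ Finset.range (N + 1),
          iteratedDerivWithin j φ (Set.Icc 0 ε₀) 0 * t ^ j / (j.factorial : ℝ)))
      (Set.Ioo 0 ε₀) ∧
    Filter.Tendsto
      (fun ε : ℝ => (∫ t in ε..ε₀, t ^ (α + m - 1) * φ t) +
        ∑ j ∈ Finset.range (N + 1),
          iteratedDerivWithin j φ (Set.Icc 0 ε₀) 0 / ((α + m + j) * (j.factorial : ℝ))
            * ε ^ (α + m + j))
      (nhdsWithin 0 (Set.Ioi 0))
      (nhds ((∑ j ∈ Finset.range (N + 1),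
          iteratedDerivWithin j φ (Set.Icc 0 ε₀) 0 / ((α + m + j) * (j.factorial : ℝ))
            * ε₀ ^ (α + m + j)) +
        ∫ t in Set.Ioo (0 : ℝ) ε₀, t ^ (α + m - 1) *
          (φ t - ∑ j ∈ Finset.range (N + 1),
            iteratedDerivWithin j φ (Set.Icc 0 ε₀) 0 * t ^ j / (j.factorial : ℝ)))) := by
  have hβN : -1 < α + m + N := by
    have hfloor : ((⌊-α⌋ : ℤ) : ℝ) = N + m := by exact_mod_cast (by omega : ⌊-α⌋ = N + m)
    linarith [Int.lt_floor_add_one (-α)]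
  have hβ : ∀ j ≤ N, α + m + j ≠ 0 := fun j _ h =>
    hαint (-(m + j)) (by push_cast; linarith)
  obtain ⟨C, hC⟩ := exists_abs_sub_taylorSum_le hε₀.le hφ
  exact tendsto_intervalIntegral_add_counterterm hε₀ hβN hβ hφ.continuousOn hC

/-- Hadamard's finite part (non-integer exponent case): for `α < -m` a
non-integer real number, `N = ⌊-α⌋ - m` and `φ` of class `C^{N+1}` on `[0, ε₀]`,
the regularized quantity `∫_ε^{ε₀} t^{α+m-1} φ t dt + Σ_j φ^{(j)}(0)/((α+m+j) j!) ε^{α+m+j}`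
converges, as `ε → 0⁺`, to
`Σ_j φ^{(j)}(0)/((α+m+j) j!) ε₀^{α+m+j} + ∫_0^{ε₀} t^{α+m-1}(φ t - T t) dt`,
where `T` is the degree-`N` Taylor polynomial of `φ` at `0` and the last
integral is finite. -/
theorem stmt_3 (m : ℕ) (hm : 1 ≤ m) (α : ℝ) (hα : α < -(m : ℝ))
    (hαint : ∀ n : ℤ, α ≠ (n : ℝ))
    (N : ℕ) (hN : (N : ℤ) = ⌊-α⌋ - m)
    (ε₀ : ℝ) (hε₀ : 0 < ε₀) (φ : ℝ → ℝ)
    (hφ : ContDiffOn ℝ (N + 1) φ (Set.Icc 0 ε₀)) :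
    IntegrableOn
      (fun t : ℝ => t ^ (α + m - 1) *
        (φ t - ∑ j ∈ Finset.range (N + 1),
          iteratedDerivWithin j φ (Set.Icc 0 ε₀) 0 * t ^ j / (j.factorial : ℝ)))
      (Set.Ioo 0 ε₀) ∧
    Filter.Tendsto
      (fun ε : ℝ => (∫ t in ε..ε₀, t ^ (α + m - 1) * φ t) +
        ∑ j ∈ Finset.range (N + 1),
          iteratedDerivWithin j φ (Set.Icc 0 ε₀) 0 / ((α + m + j) * (j.factorial : ℝ))
            * ε ^ (α + m + j))
      (nhdsWithin 0 (Set.Ioi 0))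
      (nhds ((∑ j ∈ Finset.range (N + 1),
          iteratedDerivWithin j φ (Set.Icc 0 ε₀) 0 / ((α + m + j) * (j.factorial : ℝ))
            * ε₀ ^ (α + m + j)) +
        ∫ t in Set.Ioo (0 : ℝ) ε₀, t ^ (α + m - 1) *
          (φ t - ∑ j ∈ Finset.range (N + 1),
            iteratedDerivWithin j φ (Set.Icc 0 ε₀) 0 * t ^ j / (j.factorial : ℝ)))) :=
  stmt_3_general m α hαint N hN ε₀ hε₀ φ hφ
end

section
/- Let m ≥ 1 be an integer and let α be an integer with α ≤ −m. Set N = −α − m. Let ε₀ > 0 and let φ : ℝ → ℝ be of class C^{N+1} on [0, ε₀]. Let T(t) = Σ_{j=0}^{N} φ^{(j)}(0) t^j / j! be the degree-N Taylor polynomial of φ at 0. Then as ε → 0⁺, the quantity ∫_ε^{ε₀} t^{α+m−1} φ(t) dt + Σ_{j=0}^{N−1} (φ^{(j)}(0) / ((α+m+j) · j!)) · ε^{α+m+j} + (φ^{(N)}(0)/N!) · log ε converges to the finite limit Σ_{j=0}^{N−1} (φ^{(j)}(0) / ((α+m+j) · j!)) · ε₀^{α+m+j} + (φ^{(N)}(0)/N!)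 · log ε₀ + ∫_0^{ε₀} t^{α+m−1}(φ(t) − T(t)) dt, where the last integral is finite. -/
/-!
Since `α + m = -N`, the integrand is `t^(-N-1) φ(t)`. By Taylor's theorem `φ - T = O(t^(N+1))`, so
`t^(-N-1) (φ - T)` is bounded, hence integrable, on `(0, ε₀]`. The singular part `t^(-N-1) T(t)`
has the explicit primitive `hadamardCounterterm` on `(0, ∞)` (powers `t^(j-N)` for `j < N`, and
`log t` for `j = N`), so the regularized quantity equals
`hadamardCounterterm ε₀ + ∫_ε^ε₀ t^(-N-1) (φ - T)`, which converges as `ε → 0⁺` by continuity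
of the primitive of an integrable function.
-/

open MeasureTheory Filter Topology Set

noncomputable def hadamardCounterterm (N : ℕ) (d : ℕ → ℝ) (x : ℝ) : ℝ :=
  ∑ j ∈ Finset.range N, d j / ((-(N : ℝ) + j) * (j.factorial : ℝ)) * x ^ (-(N : ℝ) + j) +
    d N / (N.factorial : ℝ) * Real.log x

lemma hasDerivAt_hadamardCounterterm (N : ℕ) (d : ℕ → ℝ) {x : ℝ} (hx : 0 < x) :
    HasDerivAt (hadamardCounterterm N d)
      (x ^ (-(N : ℝ) - 1) * ∑ j ∈ Finset.range (N + 1), d j * x ^ j / (j.factorial : ℝ)) x := by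
  have hpow (j : ℕ) : x ^ (-(N : ℝ) + j - 1) = x ^ (-(N : ℝ) - 1) * x ^ j := by
    rw [← Real.rpow_natCast, ← Real.rpow_add hx]; ring_nf
  have hsum := HasDerivAt.fun_sum (u := Finset.range N) fun j _ =>
    (Real.hasDerivAt_rpow_const (p := -(N : ℝ) + j) (Or.inl hx.ne')).const_mul
      (d j / ((-(N : ℝ) + j) * (j.factorial : ℝ)))
  refine (hsum.add ((Real.hasDerivAt_log hx.ne').const_mul (d N / (N.factorial : ℝ)))).congr_deriv ?_
  rw [Finset.sum_range_succ, mul_add, Finset.mul_sum]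
  congr 1
  · refine Finset.sum_congr rfl fun j hj => ?_
    have hj : -(N : ℝ) + j ≠ 0 := by
      have : (j : ℝ) < N := by exact_mod_cast Finset.mem_range.mp hj
      linarith
    rw [hpow]
    field_simp
  · have hinv : x ^ (-(N : ℝ) - 1) * x ^ N = x⁻¹ := by
      rw [← hpow, neg_add_cancel, zero_sub, Real.rpow_neg_one]
    rw [← hinv]
    ring

lemma integral_rpow_neg_mul_sum_eq_hadamardCounterterm_sub (N : ℕ) (d : ℕ → ℝ) {a b : ℝ}
    (ha : 0 < a) (hb : 0 < b) :
    ∫ t in a..b, t ^ (-(N : ℝ) - 1) * ∑ j ∈ Finset.range (N + 1), d j * t ^ j / (j.factorial : ℝ) =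
      hadamardCounterterm N d b - hadamardCounterterm N d a := by
  have hpos : ∀ t ∈ uIcc a b, 0 < t := fun t ht => (lt_min ha hb).trans_le ht.1
  refine intervalIntegral.integral_eq_sub_of_hasDerivAt
    (fun t ht => hasDerivAt_hadamardCounterterm N d (hpos t ht)) (ContinuousOn.intervalIntegrable ?_)
  exact ContinuousOn.mul (fun t ht => (Real.continuousAt_rpow_const _ _
    (Or.inl (hpos t ht).ne')).continuousWithinAt) (by fun_prop)

lemma taylorWithinEval_zero_eq_sum (f : ℝ → ℝ) (n : ℕ) (s : Set ℝ) (x : ℝ) :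
    taylorWithinEval f n s 0 x =
      ∑ j ∈ Finset.range (n + 1), iteratedDerivWithin j f s 0 * x ^ j / (j.factorial : ℝ) := by
  rw [taylor_within_apply]
  refine Finset.sum_congr rfl fun j _ => ?_
  rw [sub_zero, smul_eq_mul]
  ring

lemma continuous_taylorWithinEval {E : Type*} [NormedAddCommGroup E] [NormedSpace ℝ E]
    (f : ℝ → E) (n : ℕ) (s : Set ℝ) (x₀ : ℝ) : Continuous (taylorWithinEval f n s x₀) := by
  have : taylorWithinEval f n s x₀ = fun x => ∑ k ∈ Finset.range (n + 1),
      ((k.factorial : ℝ)⁻¹ * (x - x₀) ^ k) • iteratedDerivWithin k f s x₀ :=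
    funext (taylor_within_apply f n s x₀)
  rw [this]
  fun_prop

section FinitePart

variable {N : ℕ} {ε₀ : ℝ} {φ : ℝ → ℝ}

lemma norm_rpow_neg_mul_sub_taylorWithinEval_le (hε₀ : 0 ≤ ε₀)
    (hφ : ContDiffOn ℝ (N + 1) φ (Icc 0 ε₀)) :
    ∃ C, ∀ t ∈ Ioc 0 ε₀,
      ‖t ^ (-(N : ℝ) - 1) * (φ t - taylorWithinEval φ N (Icc 0 ε₀) 0 t)‖ ≤ C := by
  obtain ⟨C, hC⟩ := exists_taylor_mean_remainder_bound hε₀ hφ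
  refine ⟨C, fun t ht => ?_⟩
  have hcancel : t ^ (-(N : ℝ) - 1) * t ^ (N + 1) = 1 := by
    rw [← Real.rpow_natCast, ← Real.rpow_add ht.1]
    push_cast
    simp
  calc ‖t ^ (-(N : ℝ) - 1) * (φ t - taylorWithinEval φ N (Icc 0 ε₀) 0 t)‖
      = t ^ (-(N : ℝ) - 1) * ‖φ t - taylorWithinEval φ N (Icc 0 ε₀) 0 t‖ := by
        rw [norm_mul, Real.norm_of_nonneg (Real.rpow_nonneg ht.1.le _)]
    _ ≤ t ^ (-(N : ℝ) - 1) * (C * t ^ (N + 1)) := by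
        refine mul_le_mul_of_nonneg_left ?_ (Real.rpow_nonneg ht.1.le _)
        simpa using hC t (Ioc_subset_Icc_self ht)
    _ = C := by rw [mul_left_comm, hcancel, mul_one]

lemma integrableOn_rpow_neg_mul_sub_taylorWithinEval (hε₀ : 0 ≤ ε₀)
    (hφ : ContDiffOn ℝ (N + 1) φ (Icc 0 ε₀)) :
    IntegrableOn (fun t => t ^ (-(N : ℝ) - 1) * (φ t - taylorWithinEval φ N (Icc 0 ε₀) 0 t))
      (Icc 0 ε₀) := by
  rw [integrableOn_Icc_iff_integrableOn_Ioc]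
  obtain ⟨C, hC⟩ := norm_rpow_neg_mul_sub_taylorWithinEval_le hε₀ hφ
  have hcont : ContinuousOn
      (fun t => t ^ (-(N : ℝ) - 1) * (φ t - taylorWithinEval φ N (Icc 0 ε₀) 0 t)) (Ioc 0 ε₀) := by
    refine ContinuousOn.mul (fun t ht => (Real.continuousAt_rpow_const _ _
      (Or.inl ht.1.ne')).continuousWithinAt) (ContinuousOn.sub ?_ ?_)
    · exact hφ.continuousOn.mono Ioc_subset_Icc_self
    · exact (continuous_taylorWithinEval φ N _ 0).continuousOn
  exact IntegrableOn.of_bound measure_Ioc_lt_top (hcont.aestronglyMeasurable measurableSet_Ioc) C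
    ((ae_restrict_iff' measurableSet_Ioc).mpr (Eventually.of_forall hC))

lemma integral_rpow_neg_mul_eq_hadamardCounterterm_sub_add {ε : ℝ} (hε : 0 < ε) (hεε₀ : ε ≤ ε₀)
    (hφ : ContDiffOn ℝ (N + 1) φ (Icc 0 ε₀)) :
    ∫ t in ε..ε₀, t ^ (-(N : ℝ) - 1) * φ t =
      hadamardCounterterm N (fun j => iteratedDerivWithin j φ (Icc 0 ε₀) 0) ε₀ -
        hadamardCounterterm N (fun j => iteratedDerivWithin j φ (Icc 0 ε₀) 0) ε +
        ∫ t in ε..ε₀, t ^ (-(N : ℝ) - 1) * (φ t - taylorWithinEval φ N (Icc 0 ε₀) 0 t) := by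
  have hsub : uIcc ε ε₀ ⊆ Icc 0 ε₀ := by
    rw [uIcc_of_le hεε₀]; exact Icc_subset_Icc_left hε.le
  have hremainder : IntervalIntegrable
      (fun t => t ^ (-(N : ℝ) - 1) * (φ t - taylorWithinEval φ N (Icc 0 ε₀) 0 t)) volume ε ε₀ :=
    ((integrableOn_rpow_neg_mul_sub_taylorWithinEval (hε.le.trans hεε₀) hφ).mono_set
      hsub).intervalIntegrable
  have htaylor : IntervalIntegrable
      (fun t => t ^ (-(N : ℝ) - 1) * taylorWithinEval φ N (Icc 0 ε₀) 0 t) volume ε ε₀ := by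
    refine ContinuousOn.intervalIntegrable (ContinuousOn.mul (fun t ht => ?_)
      (continuous_taylorWithinEval φ N _ 0).continuousOn)
    exact (Real.continuousAt_rpow_const _ _
      (Or.inl ((lt_min hε (hε.trans_le hεε₀)).trans_le ht.1).ne')).continuousWithinAt
  rw [← integral_rpow_neg_mul_sum_eq_hadamardCounterterm_sub N _ hε (hε.trans_le hεε₀)]
  simp_rw [← taylorWithinEval_zero_eq_sum]
  rw [← intervalIntegral.integral_add htaylor hremainder]
  congr 1 with t
  ring

theorem tendsto_integral_rpow_neg_mul_add_hadamardCounterterm (hε₀ : 0 < ε₀)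
    (hφ : ContDiffOn ℝ (N + 1) φ (Icc 0 ε₀)) :
    Tendsto (fun ε => (∫ t in ε..ε₀, t ^ (-(N : ℝ) - 1) * φ t) +
        hadamardCounterterm N (fun j => iteratedDerivWithin j φ (Icc 0 ε₀) 0) ε) (𝓝[>] 0)
      (𝓝 (hadamardCounterterm N (fun j => iteratedDerivWithin j φ (Icc 0 ε₀) 0) ε₀ +
        ∫ t in Ioo 0 ε₀, t ^ (-(N : ℝ) - 1) * (φ t - taylorWithinEval φ N (Icc 0 ε₀) 0 t))) := by
  have hprimitive := intervalIntegral.continuousOn_primitive_interval_left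
    (by rw [uIcc_of_le hε₀.le]; exact integrableOn_rpow_neg_mul_sub_taylorWithinEval hε₀.le hφ)
    0 left_mem_uIcc
  rw [uIcc_of_le hε₀.le] at hprimitive
  have hlim := (hprimitive.mono Ioc_subset_Icc_self).tendsto
  rw [nhdsWithin_Ioc_eq_nhdsGT hε₀, intervalIntegral.integral_of_le hε₀.le,
    integral_Ioc_eq_integral_Ioo] at hlim
  refine (hlim.const_add _).congr' ?_
  filter_upwards [Ioc_mem_nhdsGT hε₀] with ε hε
  rw [integral_rpow_neg_mul_eq_hadamardCounterterm_sub_add hε.1 hε.2 hφ]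
  ring

end FinitePart

theorem stmt_4_general (m : ℕ) (α : ℤ)
    (N : ℕ) (hN : (N : ℤ) = -α - m)
    (ε₀ : ℝ) (hε₀ : 0 < ε₀) (φ : ℝ → ℝ)
    (hφ : ContDiffOn ℝ (N + 1) φ (Set.Icc 0 ε₀)) :
    IntegrableOn
      (fun t : ℝ => t ^ ((α : ℝ) + m - 1) *
        (φ t - ∑ j ∈ Finset.range (N + 1),
          iteratedDerivWithin j φ (Set.Icc 0 ε₀) 0 * t ^ j / (j.factorial : ℝ)))
      (Set.Ioo 0 ε₀) ∧
    Filter.Tendsto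
      (fun ε : ℝ => (∫ t in ε..ε₀, t ^ ((α : ℝ) + m - 1) * φ t) +
        (∑ j ∈ Finset.range N,
          iteratedDerivWithin j φ (Set.Icc 0 ε₀) 0 / (((α : ℝ) + m + j) * (j.factorial : ℝ))
            * ε ^ ((α : ℝ) + m + j)) +
        iteratedDerivWithin N φ (Set.Icc 0 ε₀) 0 / (N.factorial : ℝ) * Real.log ε)
      (nhdsWithin 0 (Set.Ioi 0))
      (nhds ((∑ j ∈ Finset.range N,
          iteratedDerivWithin j φ (Set.Icc 0 ε₀) 0 / (((α : ℝ) + m + j) * (j.factorial : ℝ))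
            * ε₀ ^ ((α : ℝ) + m + j)) +
        iteratedDerivWithin N φ (Set.Icc 0 ε₀) 0 / (N.factorial : ℝ) * Real.log ε₀ +
        ∫ t in Set.Ioo (0 : ℝ) ε₀, t ^ ((α : ℝ) + m - 1) *
          (φ t - ∑ j ∈ Finset.range (N + 1),
            iteratedDerivWithin j φ (Set.Icc 0 ε₀) 0 * t ^ j / (j.factorial : ℝ)))) := by
  have hαm : (α : ℝ) + m = -N := by
    have : ((N : ℤ) : ℝ) = ((-α - m : ℤ) : ℝ) := congrArg _ hN
    push_cast at this
    linarith
  simp only [hαm, ← taylorWithinEval_zero_eq_sum]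
  refine ⟨(integrableOn_rpow_neg_mul_sub_taylorWithinEval hε₀.le hφ).mono_set Ioo_subset_Icc_self,
    ?_⟩
  simpa only [hadamardCounterterm, add_assoc] using
    tendsto_integral_rpow_neg_mul_add_hadamardCounterterm hε₀ hφ

/-- Hadamard's finite part (integer exponent case, with log counterterm): for
an integer `α ≤ -m`, `N = -α - m` and `φ` of class `C^{N+1}` on `[0, ε₀]`, the
regularized quantity
`∫_ε^{ε₀} t^{α+m-1} φ t dt + Σ_{j<N} φ^{(j)}(0)/((α+m+j) j!) ε^{α+m+j} + (φ^{(N)}(0)/N!) log ε`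
converges, as `ε → 0⁺`, to
`Σ_{j<N} φ^{(j)}(0)/((α+m+j) j!) ε₀^{α+m+j} + (φ^{(N)}(0)/N!) log ε₀ + ∫_0^{ε₀} t^{α+m-1}(φ t - T t) dt`,
where `T` is the degree-`N` Taylor polynomial of `φ` at `0` and the last
integral is finite. -/
theorem stmt_4 (m : ℕ) (hm : 1 ≤ m) (α : ℤ) (hα : α ≤ -(m : ℤ))
    (N : ℕ) (hN : (N : ℤ) = -α - m)
    (ε₀ : ℝ) (hε₀ : 0 < ε₀) (φ : ℝ → ℝ)
    (hφ : ContDiffOn ℝ (N + 1) φ (Set.Icc 0 ε₀)) :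
    IntegrableOn
      (fun t : ℝ => t ^ ((α : ℝ) + m - 1) *
        (φ t - ∑ j ∈ Finset.range (N + 1),
          iteratedDerivWithin j φ (Set.Icc 0 ε₀) 0 * t ^ j / (j.factorial : ℝ)))
      (Set.Ioo 0 ε₀) ∧
    Filter.Tendsto
      (fun ε : ℝ => (∫ t in ε..ε₀, t ^ ((α : ℝ) + m - 1) * φ t) +
        (∑ j ∈ Finset.range N,
          iteratedDerivWithin j φ (Set.Icc 0 ε₀) 0 / (((α : ℝ) + m + j) * (j.factorial : ℝ))
            * ε ^ ((α : ℝ) + m + j)) +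
        iteratedDerivWithin N φ (Set.Icc 0 ε₀) 0 / (N.factorial : ℝ) * Real.log ε)
      (nhdsWithin 0 (Set.Ioi 0))
      (nhds ((∑ j ∈ Finset.range N,
          iteratedDerivWithin j φ (Set.Icc 0 ε₀) 0 / (((α : ℝ) + m + j) * (j.factorial : ℝ))
            * ε₀ ^ ((α : ℝ) + m + j)) +
        iteratedDerivWithin N φ (Set.Icc 0 ε₀) 0 / (N.factorial : ℝ) * Real.log ε₀ +
        ∫ t in Set.Ioo (0 : ℝ) ε₀, t ^ ((α : ℝ) + m - 1) *
          (φ t - ∑ j ∈ Finset.range (N + 1),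
            iteratedDerivWithin j φ (Set.Icc 0 ε₀) 0 * t ^ j / (j.factorial : ℝ)))) :=
  stmt_4_general m α N hN ε₀ hε₀ φ hφ
end

section
/- Let E be a real inner product space, m ≥ 1, let v ∈ E with ‖v‖ = 1, and let u : Fin m → E be an orthonormal family. Define û_i = 2⟨u_i, v⟩·v − u_i for 1 ≤ i ≤ m. Then det(⟨û_i, u_j⟩)_{1≤i,j≤m} = (−1)^{m−1} · (2 Σ_{i=1}^m ⟨u_i, v⟩² − 1). -/
/-! With `cᵢ = ⟨uᵢ, v⟩`, orthonormality gives `⟨ûᵢ, uⱼ⟩ = 2 cᵢ cⱼ - δᵢⱼ`, so the matrix is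
`2 c cᵀ - 1`, and the matrix determinant lemma evaluates its determinant as
`(-1)^m (1 - 2 ‖c‖²)`. -/

open Matrix

theorem Matrix.det_vecMulVec_sub_one {n R : Type*} [Fintype n] [DecidableEq n] [CommRing R]
    (a b : n → R) :
    (vecMulVec a b - 1).det = (-1) ^ Fintype.card n * (1 - b ⬝ᵥ a) := by
  have hneg : vecMulVec a b - 1 = -(1 + replicateCol Unit (-a) * replicateRow Unit b) := by
    rw [← vecMulVec_eq, neg_vecMulVec]
    abel
  rw [hneg, det_neg, det_one_add_replicateCol_mul_replicateRow, dotProduct_neg, sub_eq_add_neg]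

theorem Orthonormal.of_inner_smul_sub_eq {E ι : Type*} [NormedAddCommGroup E]
    [InnerProductSpace ℝ E] [DecidableEq ι] {u : ι → E} (hu : Orthonormal ℝ u)
    (a : ι → ℝ) (v : E) :
    (of fun i j => inner ℝ (a i • v - u i) (u j)) =
      vecMulVec a (fun j => inner ℝ (u j) v) - 1 := by
  ext i j
  rw [of_apply, inner_sub_left, real_inner_smul_left, real_inner_comm (u j) v,
    orthonormal_iff_ite.mp hu, Matrix.sub_apply, vecMulVec_apply, one_apply]

theorem stmt_11_general {E : Type*} [NormedAddCommGroup E] [InnerProductSpace ℝ E]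
    (m : ℕ) (hm : 1 ≤ m) (v : E)
    (u : Fin m → E) (hu : Orthonormal ℝ u) :
    (Matrix.of fun i j : Fin m =>
        (inner ℝ ((2 * (inner ℝ (u i) v : ℝ)) • v - u i) (u j) : ℝ)).det =
      (-1) ^ (m - 1) * (2 * ∑ i, (inner ℝ (u i) v : ℝ) ^ 2 - 1) := by
  have hdot : ((fun k => inner ℝ (u k) v) ⬝ᵥ fun k => 2 * inner ℝ (u k) v) =
      2 * ∑ i, (inner ℝ (u i) v : ℝ) ^ 2 := by
    simp only [dotProduct, Finset.mul_sum]
    exact Finset.sum_congr rfl fun k _ => by ring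
  obtain ⟨k, rfl⟩ := Nat.exists_eq_add_of_le' hm
  rw [hu.of_inner_smul_sub_eq, det_vecMulVec_sub_one, hdot, Fintype.card_fin, Nat.add_sub_cancel,
    pow_succ]
  ring

/-- For a unit vector `v` and an orthonormal family `u`, with
`ûᵢ = 2⟨uᵢ, v⟩ v - uᵢ`, one has
`det(⟨ûᵢ, uⱼ⟩) = (-1)^{m-1} (2 Σᵢ ⟨uᵢ, v⟩² - 1)`. -/
theorem stmt_11 {E : Type*} [NormedAddCommGroup E] [InnerProductSpace ℝ E]
    (m : ℕ) (hm : 1 ≤ m) (v : E) (hv : ‖v‖ = 1)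
    (u : Fin m → E) (hu : Orthonormal ℝ u) :
    (Matrix.of fun i j : Fin m =>
        (inner ℝ ((2 * (inner ℝ (u i) v : ℝ)) • v - u i) (u j) : ℝ)).det =
      (-1) ^ (m - 1) * (2 * ∑ i, (inner ℝ (u i) v : ℝ) ^ 2 - 1) :=
  stmt_11_general m hm v u hu
end
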